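/- (Truth preservation of splitting one variable in the 3-QBF-3 reduction.) Let ψ = Q₁x₁⋯Qₙxₙ φ be a quantified CNF formula and let xᵢ be a variable appearing in exactly 3k clauses Cᵢ₁,…,Cᵢ₍₃ₖ₎ (k ≥ 1). Let ψ' be obtained from ψ as follows: replace the quantifier block Qᵢxᵢ by Qᵢ xᵢ¹ ∃xᵢ² ∃xᵢ³ ⋯ ∃xᵢ³ᵏ ∀yᵢ¹ ⋯ ∀yᵢᵏ (fresh variables, quantified at position i in this order); in each clause Cᵢⱼ replace the occurrence of xᵢ by xᵢʲ; and add the 3k clauses xᵢʲ ∨ ¬xᵢʲ⁺¹ ∨ yᵢ⌈j/3⌉ for 1 ≤ j ≤ 3k (with xᵢ³ᵏ⁺¹ = xᵢ¹). Then ψ is true if and only if ψ' is true. -/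

import Mathlib

/-- Quantifiers for quantified Boolean formulas. -/
inductive Quant
  | ex  : Quant
  | all : Quant

/-- A clause: a finite set of literals, a literal being a pair of a variable
(variables are indexed by `ℕ`, the index `v` representing `x_{v+1}`) and a
polarity (`true` for the variable, `false` for its negation). -/
abbrev Clause := Finset (ℕ × Bool)

/-- A CNF formula: a finite list of clauses. -/
abbrev CNF := List Clause

/-- A valuation `ν` satisfies a CNF formula `φ` if every clause of `φ`
contains a literal made true by `ν`. -/
def CNF.sat (ν : ℕ → Bool) (φ : CNF) : Prop :=
  ∀ C ∈ φ, ∃ l ∈ C, ν l.1 = l.2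

/-- Auxiliary truth predicate: quantify the values of the variables
`i, i + 1, …` according to the remaining quantifier list, on top of the
partial valuation `ν`. -/
def QbfTrueAux (φ : CNF) : List Quant → ℕ → (ℕ → Bool) → Prop
  | [], _, ν => CNF.sat ν φ
  | Quant.ex :: qs, i, ν => ∃ b, QbfTrueAux φ qs (i + 1) (Function.update ν i b)
  | Quant.all :: qs, i, ν => ∀ b, QbfTrueAux φ qs (i + 1) (Function.update ν i b)

/-- Truth of the quantified Boolean formula `Q₁x₁ ⋯ Qₙxₙ φ`, where
`qs = [Q₁, …, Qₙ]` and the variables `0, …, n - 1` (representing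
`x₁, …, xₙ`) are quantified in this order. -/
def QbfTrue (qs : List Quant) (φ : CNF) : Prop :=
  QbfTrueAux φ qs 0 (fun _ => false)

/-- The degree of a variable `v` in a CNF formula: the number of clauses in
which `v` appears, in either polarity. -/
def degree (φ : CNF) (v : ℕ) : ℕ :=
  φ.countP (fun C => decide (∃ b : Bool, (v, b) ∈ C))

/-- The number of clauses among the first `c` clauses of `φ` in which the
variable `v` appears. -/
def occ (φ : CNF) (v c : ℕ) : ℕ :=
  (φ.take c).countP (fun C => decide (∃ b : Bool, (v, b) ∈ C))

/-- Renaming of the variables other than the split variable `i₀`: the fresh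
block `xᵢ¹, …, xᵢ³ᵏ, yᵢ¹, …, yᵢᵏ` occupies the `4k` indices
`i₀, …, i₀ + 4k - 1`, so variables above `i₀` are shifted by `4k - 1`. -/
def rename (i₀ k v : ℕ) : ℕ :=
  if v < i₀ then v else v + (4 * k - 1)

/-- The clause at position `c` of `φ`, with the occurrence of the split
variable `i₀` (this is its `occ φ i₀ c + 1`-st occurrence, replaced by the
fresh variable `xᵢ^(occ φ i₀ c + 1)`, of index `i₀ + occ φ i₀ c`) and the other
variables renamed. -/
def splitClause (φ : CNF) (i₀ k c : ℕ) (C : Clause) : Clause :=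
  C.image (fun l =>
    (if l.1 = i₀ then i₀ + occ φ i₀ c else rename i₀ k l.1, l.2))

/-- The CNF formula of the splitting construction: the clauses of `φ` with the
`j`-th occurrence of the variable `i₀` replaced by `xᵢʲ` (of index
`i₀ + j - 1`), together with the `3k` gadget clauses
`xᵢʲ ∨ ¬xᵢ^(j+1) ∨ yᵢ^⌈j/3⌉` for `1 ≤ j ≤ 3k` (with `xᵢ^(3k+1) = xᵢ¹`; the
variable `yᵢˡ` has index `i₀ + 3k + l - 1`). -/
def splitCNF (φ : CNF) (i₀ k : ℕ) : CNF :=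
  φ.zipIdx.map (fun p => splitClause φ i₀ k p.2 p.1) ++
    (List.range (3 * k)).map (fun j =>
      ({(i₀ + j, true),
        (i₀ + (j + 1) % (3 * k), false),
        (i₀ + 3 * k + j / 3, true)} : Clause))

/-! If `xᵢ` and `xᵢ¹` receive the value `b`, the existential player of `ψ'` gives every copy
`xᵢʲ` the value `b`: each gadget clause `xᵢʲ ∨ ¬xᵢ^(j+1) ∨ yᵢ^⌈j/3⌉` then holds, and each
substituted clause has the value of the original one. Conversely, the universal player of `ψ'`
may set every `yᵢˡ` to false; the gadget clauses then become the cyclic implications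
`xᵢ^(j+1) → xᵢʲ`, which force all copies to agree with `xᵢ¹`. In both cases the remaining
quantifiers are played in lockstep on valuations related by the renaming of the variables. -/

open Function Set

theorem eq_of_cyclic_imp {g : ℕ → Bool} {m : ℕ}
    (h : ∀ j < m, g ((j + 1) % m) = true → g j = true) : ∀ j < m, g j = g 0 := by
  have down : ∀ d j, j + d < m → g (j + d) = true → g j = true := by
    intro d
    induction d with
    | zero => intro j _ hj; simpa using hj
    | succ d ih =>
      intro j hjd hg
      refine ih j (by omega) (h (j + d) (by omega) ?_)
      rwa [Nat.mod_eq_of_lt (by omega)]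
  intro j hj
  cases h0 : g 0
  · refine Bool.eq_false_iff.2 fun hgj => ?_
    simpa [h0] using down j 0 (by omega) (by rwa [Nat.zero_add])
  · have hlast : g (m - 1) = true :=
      h (m - 1) (by omega) (by rwa [Nat.sub_add_cancel (by omega), Nat.mod_self])
    exact down (m - 1 - j) j (by omega) (by rwa [Nat.add_sub_of_le (by omega)])

theorem occ_lt_degree {φ : CNF} {v c : ℕ} (hc : c < φ.length) (hv : ∃ b, (v, b) ∈ φ[c]) :
    occ φ v c < degree φ v := by
  have hle := (List.take_sublist (c + 1) φ).countP_le
    (p := fun C => decide (∃ b : Bool, (v, b) ∈ C))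
  rw [List.take_add_one, List.countP_append, List.getElem?_eq_getElem hc] at hle
  simp only [Option.toList_some, List.countP_singleton, decide_eq_true hv] at hle
  exact hle

theorem eqOn_compl_Ico_iff_exists_update {ν ν' : ℕ → Bool} {i m : ℕ} :
    EqOn ν' ν (Ico i (i + (m + 1)))ᶜ ↔ ∃ b, EqOn ν' (update ν i b) (Ico (i + 1) (i + 1 + m))ᶜ := by
  constructor
  · intro h
    refine ⟨ν' i, fun v hv => ?_⟩
    rcases eq_or_ne v i with rfl | hvi
    · simp
    · rw [update_of_ne hvi]
      exact h (by simp_all; omega)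
  · rintro ⟨b, h⟩ v hv
    simp only [mem_compl_iff, mem_Ico, not_and_or, not_le, not_lt] at hv
    rw [h (by simp; omega), update_of_ne (by omega)]

theorem qbfTrueAux_replicate_ex_append (φ : CNF) (rest : List Quant) :
    ∀ (m i : ℕ) (ν : ℕ → Bool), QbfTrueAux φ (List.replicate m .ex ++ rest) i ν ↔
      ∃ ν', EqOn ν' ν (Ico i (i + m))ᶜ ∧ QbfTrueAux φ rest (i + m) ν'
  | 0, i, ν => by simp
  | m + 1, i, ν => by
    simp only [List.replicate_succ, List.cons_append, QbfTrueAux,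
      qbfTrueAux_replicate_ex_append φ rest m, eqOn_compl_Ico_iff_exists_update]
    rw [show i + 1 + m = i + (m + 1) by omega, exists_comm]
    simp only [exists_and_right]

theorem qbfTrueAux_replicate_all_append (φ : CNF) (rest : List Quant) :
    ∀ (m i : ℕ) (ν : ℕ → Bool), QbfTrueAux φ (List.replicate m .all ++ rest) i ν ↔
      ∀ ν', EqOn ν' ν (Ico i (i + m))ᶜ → QbfTrueAux φ rest (i + m) ν'
  | 0, i, ν => by simp
  | m + 1, i, ν => by
    simp only [List.replicate_succ, List.cons_append, QbfTrueAux,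
      qbfTrueAux_replicate_all_append φ rest m, eqOn_compl_Ico_iff_exists_update,
      forall_exists_index]
    rw [show i + 1 + m = i + (m + 1) by omega]
    exact forall_comm

theorem qbfTrueAux_append_congr {φ φ' : CNF} {rest rest' : List Quant} {d : ℕ}
    (R : ℕ → (ℕ → Bool) → (ℕ → Bool) → Prop)
    (hR : ∀ n ν ν' b, R n ν ν' → R (n + 1) (update ν n b) (update ν' (n + d) b)) :
    ∀ (qs : List Quant) (i : ℕ),
    (∀ ν ν', R (i + qs.length) ν ν' →
      (QbfTrueAux φ rest (i + qs.length) ν ↔ QbfTrueAux φ' rest' (i + qs.length + d) ν')) →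
    ∀ ν ν', R i ν ν' → (QbfTrueAux φ (qs ++ rest) i ν ↔ QbfTrueAux φ' (qs ++ rest') (i + d) ν')
  | [], i, hend, ν, ν', h => hend ν ν' h
  | q :: qs, i, hend, ν, ν', h => by
    have ih : ∀ b, QbfTrueAux φ (qs ++ rest) (i + 1) (update ν i b) ↔
        QbfTrueAux φ' (qs ++ rest') (i + d + 1) (update ν' (i + d) b) := fun b => by
      rw [show i + d + 1 = i + 1 + d by omega]
      refine qbfTrueAux_append_congr R hR qs (i + 1) ?_ _ _ (hR i ν ν' b h)
      simpa only [List.length_cons, ← add_assoc, Nat.add_right_comm i qs.length 1] using hend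
    cases q
    · exact exists_congr ih
    · exact forall_congr' ih

theorem QbfTrueAux.exists_sat_of_lt {φ : CNF} {C : Clause} (hC : C ∈ φ) :
    ∀ {qs : List Quant} {i : ℕ} {ν : ℕ → Bool},
    (∀ l ∈ C, l.1 < i) → QbfTrueAux φ qs i ν → ∃ l ∈ C, ν l.1 = l.2
  | [], _, _, _, h => h C hC
  | .ex :: _, _, _, hlt, ⟨b, h⟩ => by
    obtain ⟨l, hl, hv⟩ := exists_sat_of_lt hC (fun l hl => Nat.lt_succ_of_lt (hlt l hl)) h
    exact ⟨l, hl, by rwa [update_of_ne (hlt l hl).ne] at hv⟩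
  | .all :: _, _, _, hlt, h => by
    obtain ⟨l, hl, hv⟩ := exists_sat_of_lt hC (fun l hl => Nat.lt_succ_of_lt (hlt l hl)) (h false)
    exact ⟨l, hl, by rwa [update_of_ne (hlt l hl).ne] at hv⟩

def gadgetClause (i₀ k j : ℕ) : Clause :=
  {(i₀ + j, true), (i₀ + (j + 1) % (3 * k), false), (i₀ + 3 * k + j / 3, true)}

theorem mem_splitCNF {φ : CNF} {i₀ k : ℕ} {C : Clause} :
    C ∈ splitCNF φ i₀ k ↔
      (∃ c, ∃ hc : c < φ.length, splitClause φ i₀ k c φ[c] = C) ∨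
        ∃ j < 3 * k, gadgetClause i₀ k j = C := by
  simp only [splitCNF, List.mem_append, List.mem_map, List.mem_range, gadgetClause]
  congr! 1
  simp [List.mem_iff_getElem]

def IsSplitBelow (i₀ k n : ℕ) (ν ν' : ℕ → Bool) : Prop :=
  (∀ v < n, v ≠ i₀ → ν' (rename i₀ k v) = ν v) ∧ ∀ j < 3 * k, ν' (i₀ + j) = ν i₀

namespace IsSplitBelow

variable {φ : CNF} {i₀ k n : ℕ} {ν ν' : ℕ → Bool}

theorem update (hn : i₀ < n) (h : IsSplitBelow i₀ k n ν ν') (b : Bool) :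
    IsSplitBelow i₀ k (n + 1) (update ν n b) (update ν' (n + (4 * k - 1)) b) := by
  refine ⟨fun v hv hvi => ?_, fun j hj => ?_⟩
  · rcases eq_or_ne v n with rfl | hvn
    · simp [rename, hn.not_gt]
    · have hrv : rename i₀ k v ≠ n + (4 * k - 1) := by unfold rename; split_ifs <;> omega
      rw [update_of_ne hvn, update_of_ne hrv, h.1 v (by omega) hvi]
  · rw [update_of_ne (by omega), update_of_ne (by omega), h.2 j hj]

theorem sat_splitCNF_iff (h : IsSplitBelow i₀ k n ν ν') (hvars : ∀ C ∈ φ, ∀ l ∈ C, l.1 < n)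
    (hdeg : degree φ i₀ = 3 * k) : CNF.sat ν' (splitCNF φ i₀ k) ↔ CNF.sat ν φ := by
  have hlit : ∀ c (hc : c < φ.length), ∀ l ∈ φ[c],
      ν' (if l.1 = i₀ then i₀ + occ φ i₀ c else rename i₀ k l.1) = ν l.1 := by
    intro c hc l hl
    split_ifs with hli
    · rw [h.2 _ (hdeg ▸ occ_lt_degree hc ⟨l.2, hli ▸ hl⟩), hli]
    · exact h.1 _ (hvars _ (List.getElem_mem hc) l hl) hli
  have hgadget : ∀ j < 3 * k, ∃ l ∈ gadgetClause i₀ k j, ν' l.1 = l.2 := by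
    intro j hj
    cases hb : ν i₀
    · exact ⟨(i₀ + (j + 1) % (3 * k), false), by simp [gadgetClause],
        (h.2 _ (Nat.mod_lt _ (by omega))).trans hb⟩
    · exact ⟨(i₀ + j, true), by simp [gadgetClause], (h.2 j hj).trans hb⟩
  have hclause : ∀ c (hc : c < φ.length),
      (∃ l ∈ splitClause φ i₀ k c φ[c], ν' l.1 = l.2) ↔ ∃ l ∈ φ[c], ν l.1 = l.2 := by
    intro c hc
    simp only [splitClause, Finset.exists_mem_image]
    exact exists_congr fun l => and_congr_right fun hl => by rw [hlit c hc l hl]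
  constructor
  · intro hs C hC
    obtain ⟨c, hc, rfl⟩ := List.mem_iff_getElem.1 hC
    exact (hclause c hc).1 (hs _ (mem_splitCNF.2 (.inl ⟨c, hc, rfl⟩)))
  · intro hs C hC
    rcases mem_splitCNF.1 hC with ⟨c, hc, rfl⟩ | ⟨j, hj, rfl⟩
    · exact (hclause c hc).2 (hs _ (List.getElem_mem hc))
    · exact hgadget j hj

theorem qbfTrueAux_splitCNF_iff {qs : List Quant} (hdeg : degree φ i₀ = 3 * k)
    (hn : i₀ < n) (hvars : ∀ C ∈ φ, ∀ l ∈ C, l.1 < n + qs.length)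
    (h : IsSplitBelow i₀ k n ν ν') :
    QbfTrueAux φ qs n ν ↔ QbfTrueAux (splitCNF φ i₀ k) qs (n + (4 * k - 1)) ν' := by
  have hcongr := qbfTrueAux_append_congr (φ := φ) (φ' := splitCNF φ i₀ k) (rest := [])
    (rest' := []) (fun m ν ν' => i₀ < m ∧ IsSplitBelow i₀ k m ν ν')
    (fun _ _ _ b ⟨hm, h⟩ => ⟨by omega, h.update hm b⟩) qs n
    (fun _ _ h' => (h'.2.sat_splitCNF_iff hvars hdeg).symm) ν ν' ⟨hn, h⟩
  rwa [List.append_nil] at hcongr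

end IsSplitBelow

theorem isSplitBelow_succ_of_eqOn {i₀ k : ℕ} {ν ν' : ℕ → Bool}
    (hout : EqOn ν' ν (Ico (i₀ + 1) (i₀ + 3 * k + k))ᶜ)
    (hcopies : ∀ j < 3 * k, ν' (i₀ + j) = ν i₀) :
    IsSplitBelow i₀ k (i₀ + 1) ν ν' := by
  refine ⟨fun v hv hvi => ?_, hcopies⟩
  rw [rename, if_pos (by omega)]
  exact hout (by simp; omega)

theorem QbfTrueAux.splitCNF_copies_eq {φ : CNF} {qs : List Quant} {i₀ k n : ℕ} {ν' : ℕ → Bool}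
    (hn : i₀ + 3 * k + k ≤ n) (h : QbfTrueAux (splitCNF φ i₀ k) qs n ν')
    (hy : ∀ l < k, ν' (i₀ + 3 * k + l) = false) : ∀ j < 3 * k, ν' (i₀ + j) = ν' (i₀ + 0) := by
  refine eq_of_cyclic_imp (g := fun j => ν' (i₀ + j)) fun j hj hnext => ?_
  have hmod := Nat.mod_lt (j + 1) (show 3 * k > 0 by omega)
  obtain ⟨l, hl, hv⟩ := h.exists_sat_of_lt (mem_splitCNF.2 (.inr ⟨j, hj, rfl⟩)) (by
    simp only [gadgetClause, Finset.mem_insert, Finset.mem_singleton]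
    rintro l (rfl | rfl | rfl) <;> omega)
  simp only [gadgetClause, Finset.mem_insert, Finset.mem_singleton] at hl
  rcases hl with rfl | rfl | rfl
  · exact hv
  · simp [hnext] at hv
  · rw [hy (j / 3) (by omega)] at hv
    exact absurd hv Bool.false_ne_true

theorem qbfTrueAux_splitCNF_block_iff {φ : CNF} {i₀ k : ℕ} {qs : List Quant} (hk : 1 ≤ k)
    (hdeg : degree φ i₀ = 3 * k) (hvars : ∀ C ∈ φ, ∀ l ∈ C, l.1 < i₀ + 1 + qs.length)
    (ν : ℕ → Bool) :
    QbfTrueAux φ qs (i₀ + 1) ν ↔ QbfTrueAux (splitCNF φ i₀ k)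
      (List.replicate (3 * k - 1) .ex ++ (List.replicate k .all ++ qs)) (i₀ + 1) ν := by
  have e₁ : i₀ + 1 + (3 * k - 1) = i₀ + 3 * k := by omega
  have e₂ : i₀ + 1 + (4 * k - 1) = i₀ + 3 * k + k := by omega
  rw [qbfTrueAux_replicate_ex_append, e₁]
  simp only [qbfTrueAux_replicate_all_append]
  constructor
  · intro hψ
    refine ⟨fun v => if i₀ < v ∧ v < i₀ + 3 * k then ν i₀ else ν v,
      fun v hv => if_neg (by simp at hv; omega), fun ν' hν' => ?_⟩
    have hcopies : ∀ j < 3 * k, ν' (i₀ + j) = ν i₀ := by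
      intro j hj
      rw [hν' (by simp; omega)]
      dsimp only
      split_ifs with hj'
      · rfl
      · rw [show j = 0 by omega, Nat.add_zero]
    have hout : EqOn ν' ν (Ico (i₀ + 1) (i₀ + 3 * k + k))ᶜ := by
      intro v hv
      simp only [mem_compl_iff, mem_Ico, not_and_or, not_le, not_lt] at hv
      rw [hν' (by simp; omega)]
      exact if_neg (by omega)
    rw [← e₂, ← (isSplitBelow_succ_of_eqOn hout hcopies).qbfTrueAux_splitCNF_iff hdeg
      (by omega) hvars]
    exact hψ
  · rintro ⟨ν₁, hν₁, hall⟩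
    set ν₂ : ℕ → Bool := fun v => if i₀ + 3 * k ≤ v ∧ v < i₀ + 3 * k + k then false else ν₁ v
      with hν₂
    have hψ' := hall ν₂ fun v hv => if_neg (by simpa using hv)
    have hout : EqOn ν₂ ν (Ico (i₀ + 1) (i₀ + 3 * k + k))ᶜ := by
      intro v hv
      simp only [mem_compl_iff, mem_Ico, not_and_or, not_le, not_lt] at hv
      rw [hν₂]
      dsimp only
      rw [if_neg (by omega), hν₁ (by simp; omega)]
    have hcopies := hψ'.splitCNF_copies_eq le_rfl fun l hl => if_pos (by omega)
    have h0 : ν₂ (i₀ + 0) = ν i₀ := hout (by simp)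
    have hsplit := isSplitBelow_succ_of_eqOn hout fun j hj => (hcopies j hj).trans h0
    rw [hsplit.qbfTrueAux_splitCNF_iff hdeg (by omega) hvars, e₂]
    exact hψ'

/-- Truth preservation of splitting one variable in the 3-QBF-3 reduction:
let `ψ = Q₁x₁ ⋯ Qₙxₙ φ` be a quantified CNF formula over `x₁, …, xₙ` and let
`xᵢ` (of index `i₀ = qs₁.length`, with quantifier `Qi`) appear in exactly `3k`
clauses of `φ`, `k ≥ 1`. Let `ψ'` be obtained by replacing the quantifier
block `Qᵢxᵢ` by `Qᵢxᵢ¹ ∃xᵢ² ⋯ ∃xᵢ³ᵏ ∀yᵢ¹ ⋯ ∀yᵢᵏ`, replacing the `j`-th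
occurrence of `xᵢ` by `xᵢʲ`, and adding the `3k` clauses
`xᵢʲ ∨ ¬xᵢ^(j+1) ∨ yᵢ^⌈j/3⌉` for `1 ≤ j ≤ 3k` (with `xᵢ^(3k+1) = xᵢ¹`).
Then `ψ` is true iff `ψ'` is true. -/
theorem split_one_variable_truth (qs₁ qs₂ : List Quant) (Qi : Quant)
    (φ : CNF) (k : ℕ) (hk : 1 ≤ k)
    (hvars : ∀ C ∈ φ, ∀ l ∈ C, l.1 < qs₁.length + 1 + qs₂.length)
    (hdeg : degree φ qs₁.length = 3 * k) :
    QbfTrue (qs₁ ++ Qi :: qs₂) φ ↔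
      QbfTrue (qs₁ ++ (Qi :: (List.replicate (3 * k - 1) Quant.ex ++
          List.replicate k Quant.all)) ++ qs₂)
        (splitCNF φ qs₁.length k) := by
  have hψ : qs₁ ++ Qi :: qs₂ = (qs₁ ++ [Qi]) ++ qs₂ := by simp
  have hψ' : qs₁ ++ (Qi :: (List.replicate (3 * k - 1) Quant.ex ++ List.replicate k Quant.all)) ++
      qs₂ = (qs₁ ++ [Qi]) ++
        (List.replicate (3 * k - 1) Quant.ex ++ (List.replicate k Quant.all ++ qs₂)) := by simp
  rw [QbfTrue, QbfTrue, hψ, hψ']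
  refine qbfTrueAux_append_congr (d := 0) (fun _ => Eq) (fun _ _ _ _ h => h ▸ rfl) _ 0
    (fun ν _ h => ?_) _ _ rfl
  subst h
  simpa using qbfTrueAux_splitCNF_block_iff hk hdeg hvars ν
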